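/- arXiv:1909.10144 — 8 statements merged into one kernel-verified Lean document; each statement's English description precedes it below -/
import Mathlib

section
/- Let U = F + G where F : ℝⁿ → ℝ is L-smooth and G : K → ℝ is convex on a closed convex set K ⊆ ℝⁿ. Suppose x, x̃ ∈ K and y ∈ ℝⁿ satisfy the strong-monotonicity inequality −(x̃ − x)ᵀ y + G(x) − G(x̃) ≥ μ̃‖x̃ − x‖². Then for any γ ∈ (0,1], the point v = x + γ(x̃ − x) satisfies U(v) ≤ U(x) − γ(μ̃ − γL/2)‖x̃ − x‖² + γ(∇F(x) − y)ᵀ(x̃ − x). -/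
/-!
Add three estimates at `v = x + γ (x̃ - x)`: the descent lemma
`F v ≤ F x + γ ⟪∇F x, x̃ - x⟫ + L γ² ‖x̃ - x‖² / 2`, convexity
`G v ≤ G x + γ (G x̃ - G x)`, and `γ` times the strong-monotonicity inequality.
The descent lemma follows by comparing `t ↦ F (x + t d)` on `[0, 1]` with the parabola
`F x + t ⟪∇F x, d⟫ + L t² ‖d‖² / 2`, whose derivative dominates by the Lipschitz bound.
-/

open scoped RealInnerProductSpace

section LipschitzGradient

variable {E : Type*} [NormedAddCommGroup E] [InnerProductSpace ℝ E]

theorem inner_le_inner_add_of_lipschitz {g : E → E} {L : ℝ}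
    (hL : ∀ z w, ‖g z - g w‖ ≤ L * ‖z - w‖) (z w d : E) :
    ⟪g z, d⟫ ≤ ⟪g w, d⟫ + L * ‖z - w‖ * ‖d‖ :=
  calc ⟪g z, d⟫ = ⟪g w, d⟫ + ⟪g z - g w, d⟫ := by rw [inner_sub_left]; ring
    _ ≤ ⟪g w, d⟫ + ‖g z - g w‖ * ‖d‖ := by gcongr; exact real_inner_le_norm _ _
    _ ≤ ⟪g w, d⟫ + L * ‖z - w‖ * ‖d‖ := by gcongr; exact hL z w

variable [CompleteSpace E]

theorem HasGradientAt.hasDerivAt_comp_add_smul {f : E → ℝ} {f' a d : E} {t : ℝ}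
    (hf : HasGradientAt f f' (a + t • d)) :
    HasDerivAt (fun s : ℝ => f (a + s • d)) ⟪f', d⟫ t := by
  have hline : HasDerivAt (fun s : ℝ => a + s • d) d t := by
    simpa using ((hasDerivAt_id t).smul_const d).const_add a
  have := hf.hasFDerivAt.comp_hasDerivAt t hline
  simp only [InnerProductSpace.toDual_apply_apply] at this
  exact this

theorem le_add_inner_add_of_lipschitz_gradient {f : E → ℝ} {g : E → E} {L : ℝ}
    (hf : ∀ z, HasGradientAt f (g z) z) (hL : ∀ z w, ‖g z - g w‖ ≤ L * ‖z - w‖) (a b : E) :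
    f b ≤ f a + ⟪g a, b - a⟫ + L / 2 * ‖b - a‖ ^ 2 := by
  set d := b - a
  have hφ (t : ℝ) : HasDerivAt (fun s : ℝ => f (a + s • d)) ⟪g (a + t • d), d⟫ t :=
    (hf _).hasDerivAt_comp_add_smul
  have hB (t : ℝ) : HasDerivAt (fun s : ℝ => f a + s * ⟪g a, d⟫ + L / 2 * s ^ 2 * ‖d‖ ^ 2)
      (⟪g a, d⟫ + L * t * ‖d‖ ^ 2) t := by
    refine ((((hasDerivAt_id t).mul_const ⟪g a, d⟫).const_add (f a)).add
      (((hasDerivAt_pow 2 t).const_mul (L / 2)).mul_const (‖d‖ ^ 2))).congr_deriv ?_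
    simp only [Nat.cast_ofNat]
    ring
  have hslope (t : ℝ) (ht : t ∈ Set.Ico (0 : ℝ) 1) :
      ⟪g (a + t • d), d⟫ ≤ ⟪g a, d⟫ + L * t * ‖d‖ ^ 2 := by
    have := inner_le_inner_add_of_lipschitz hL (a + t • d) a d
    rw [add_sub_cancel_left, norm_smul, Real.norm_of_nonneg ht.1] at this
    exact this.trans_eq (by ring)
  have := image_le_of_deriv_right_le_deriv_boundary
    (fun t _ => (hφ t).continuousAt.continuousWithinAt) (fun t _ => (hφ t).hasDerivWithinAt)
    (by simp) (fun t _ => (hB t).continuousAt.continuousWithinAt)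
    (fun t _ => (hB t).hasDerivWithinAt) hslope (Set.right_mem_Icc.2 zero_le_one)
  simpa [d] using this

end LipschitzGradient

theorem ConvexOn.map_add_smul_sub_le {E : Type*} [AddCommGroup E] [Module ℝ E] {K : Set E}
    {G : E → ℝ} (hG : ConvexOn ℝ K G) {x x' : E} (hx : x ∈ K) (hx' : x' ∈ K) {γ : ℝ}
    (hγ0 : 0 ≤ γ) (hγ1 : γ ≤ 1) :
    G (x + γ • (x' - x)) ≤ G x + γ * (G x' - G x) :=
  calc G (x + γ • (x' - x)) = G ((1 - γ) • x + γ • x') := by congr 1; module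
    _ ≤ (1 - γ) • G x + γ • G x' := hG.2 hx hx' (sub_nonneg.2 hγ1) hγ0 (sub_add_cancel 1 γ)
    _ = G x + γ * (G x' - G x) := by simp only [smul_eq_mul]; ring

theorem stmt_0_general {n : ℕ}
    (K : Set (EuclideanSpace ℝ (Fin n)))
    (F G : EuclideanSpace ℝ (Fin n) → ℝ)
    (Fgrad : EuclideanSpace ℝ (Fin n) → EuclideanSpace ℝ (Fin n))
    (L μ : ℝ)
    (hF : ∀ z, HasGradientAt F (Fgrad z) z)
    (hL : ∀ z w, ‖Fgrad z - Fgrad w‖ ≤ L * ‖z - w‖)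
    (hG : ConvexOn ℝ K G)
    (x xt : EuclideanSpace ℝ (Fin n)) (hx : x ∈ K) (hxt : xt ∈ K)
    (y : EuclideanSpace ℝ (Fin n))
    (hmono : μ * ‖xt - x‖ ^ 2 ≤ -⟪xt - x, y⟫ + G x - G xt)
    (γ : ℝ) (hγ0 : 0 < γ) (hγ1 : γ ≤ 1) :
    F (x + γ • (xt - x)) + G (x + γ • (xt - x)) ≤
      F x + G x - γ * (μ - γ * L / 2) * ‖xt - x‖ ^ 2
        + γ * ⟪Fgrad x - y, xt - x⟫ := by
  have hF_step := le_add_inner_add_of_lipschitz_gradient hF hL x (x + γ • (xt - x))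
  rw [add_sub_cancel_left, real_inner_smul_right, norm_smul, Real.norm_of_nonneg hγ0.le]
    at hF_step
  have hG_step := hG.map_add_smul_sub_le hx hxt hγ0.le hγ1
  rw [real_inner_comm] at hmono
  rw [inner_sub_left]
  linear_combination hF_step + hG_step + γ * hmono

/-- descent of the composite objective `U = F + G` along the
relaxed step `v = x + γ (x̃ - x)`, given the strong-monotonicity inequality. -/
theorem stmt_0 {n : ℕ}
    (K : Set (EuclideanSpace ℝ (Fin n))) (hKne : K.Nonempty) (hKcl : IsClosed K)
    (hKconv : Convex ℝ K)
    (F G : EuclideanSpace ℝ (Fin n) → ℝ)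
    (Fgrad : EuclideanSpace ℝ (Fin n) → EuclideanSpace ℝ (Fin n))
    (L μ : ℝ) (hμ : 0 < μ)
    (hF : ∀ z, HasGradientAt F (Fgrad z) z)
    (hL : ∀ z w, ‖Fgrad z - Fgrad w‖ ≤ L * ‖z - w‖)
    (hG : ConvexOn ℝ K G)
    (x xt : EuclideanSpace ℝ (Fin n)) (hx : x ∈ K) (hxt : xt ∈ K)
    (y : EuclideanSpace ℝ (Fin n))
    (hmono : μ * ‖xt - x‖ ^ 2 ≤ -⟪xt - x, y⟫ + G x - G xt)
    (γ : ℝ) (hγ0 : 0 < γ) (hγ1 : γ ≤ 1) :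
    F (x + γ • (xt - x)) + G (x + γ • (xt - x)) ≤
      F x + G x - γ * (μ - γ * L / 2) * ‖xt - x‖ ^ 2
        + γ * ⟪Fgrad x - y, xt - x⟫ :=
  stmt_0_general K F G Fgrad L μ hF hL hG x xt hx hxt y hmono γ hγ0 hγ1
end

section
/- Let f̃ : K × K → ℝ be such that for each fixed z, f̃(·; z) is μ̃-strongly convex and differentiable with ∇₁f̃(z; z) = ∇f(z), where f is differentiable. Fix x ∈ K and y ∈ ℝⁿ, and let x̃ = argmin_{w ∈ K} [ f̃(w; x) + (y − ∇f(x))ᵀ(w − x) + G(w) ] for a convex function G. Then −(x̃ − x)ᵀ y + G(x) − G(x̃) ≥ μ̃‖x̃ − x‖². -/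
/-!
The subproblem objective `h` is the `μ`-strongly convex `f̃(·; x)` plus a convex function, so its
minimiser `x̃` enjoys quadratic growth: `h x̃ + μ/2 ‖x - x̃‖² ≤ h x`. The first-order bound of
strong convexity for `f̃(·; x)` at `x`, where its gradient is `∇f(x)`, supplies the other
`μ/2 ‖x̃ - x‖²`. Adding the two inequalities, the values of `f̃` and the `∇f(x)` terms cancel.
-/

open scoped RealInnerProductSpace
open Filter Topology

section StrongConvex

variable {E : Type*} [NormedAddCommGroup E] [NormedSpace ℝ E] {s : Set E} {m : ℝ} {f g : E → ℝ}
  {a b : E}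

lemma StrongConvexOn.add_convexOn (hf : StrongConvexOn s m f) (hg : ConvexOn ℝ s g) :
    StrongConvexOn s m (f + g) := by
  simpa [StrongConvexOn] using UniformConvexOn.add hf hg.uniformConvexOn_zero

lemma StrongConvexOn.slope_le (hf : StrongConvexOn s m f) (ha : a ∈ s) (hb : b ∈ s) {t : ℝ}
    (ht₀ : 0 < t) (ht₁ : t ≤ 1) :
    t⁻¹ * (f (a + t • (b - a)) - f a) ≤ f b - f a - (1 - t) * (m / 2 * ‖b - a‖ ^ 2) := by
  have hcomb := hf.2 ha hb (sub_nonneg.2 ht₁) ht₀.le (sub_add_cancel 1 t)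
  rw [show (1 - t) • a + t • b = a + t • (b - a) by module, norm_sub_rev] at hcomb
  rw [inv_mul_le_iff₀ ht₀]
  simp only [smul_eq_mul] at hcomb
  linear_combination hcomb

lemma StrongConvexOn.eventually_slope_le (hf : StrongConvexOn s m f) (ha : a ∈ s) (hb : b ∈ s) :
    ∀ᶠ t in 𝓝[>] (0 : ℝ),
      t⁻¹ * (f (a + t • (b - a)) - f a) ≤ f b - f a - (1 - t) * (m / 2 * ‖b - a‖ ^ 2) := by
  filter_upwards [Ioo_mem_nhdsGT one_pos] with t ht
  exact hf.slope_le ha hb ht.1 ht.2.le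

lemma tendsto_sub_one_sub_mul_nhdsGT (c d : ℝ) :
    Tendsto (fun t : ℝ => d - (1 - t) * c) (𝓝[>] 0) (𝓝 (d - c)) :=
  ((by fun_prop : Continuous fun t : ℝ => d - (1 - t) * c).tendsto' 0 _ (by simp)).mono_left
    nhdsWithin_le_nhds

lemma StrongConvexOn.add_sq_le_of_isMinOn (hf : StrongConvexOn s m f) (hmin : IsMinOn f s a)
    (ha : a ∈ s) (hb : b ∈ s) : f a + m / 2 * ‖b - a‖ ^ 2 ≤ f b := by
  have hslope : ∀ᶠ t in 𝓝[>] (0 : ℝ), 0 ≤ f b - f a - (1 - t) * (m / 2 * ‖b - a‖ ^ 2) := by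
    filter_upwards [hf.eventually_slope_le ha hb, Ioo_mem_nhdsGT one_pos] with t hle ht
    refine le_trans (mul_nonneg (inv_nonneg.2 ht.1.le) (sub_nonneg.2 (hmin ?_))) hle
    rw [show a + t • (b - a) = (1 - t) • a + t • b by module]
    exact hf.1 ha hb (by linarith [ht.2]) ht.1.le (by ring)
  linarith [ge_of_tendsto (tendsto_sub_one_sub_mul_nhdsGT _ _) hslope]

end StrongConvex

lemma StrongConvexOn.add_inner_add_sq_le {E : Type*} [NormedAddCommGroup E]
    [InnerProductSpace ℝ E] [CompleteSpace E] {s : Set E} {m : ℝ} {f : E → ℝ} {f' a b : E} (hf : StrongConvexOn s m f)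
    (ha : a ∈ s) (hb : b ∈ s) (hgrad : HasGradientAt f f' a) :
    f a + ⟪f', b - a⟫ + m / 2 * ‖b - a‖ ^ 2 ≤ f b := by
  have hslope := (hgrad.hasFDerivAt.hasLineDerivAt (b - a)).tendsto_slope_zero_right
  simp only [smul_eq_mul, InnerProductSpace.toDual_apply_apply] at hslope
  have := le_of_tendsto_of_tendsto hslope (tendsto_sub_one_sub_mul_nhdsGT _ _)
    (hf.eventually_slope_le ha hb)
  linarith

theorem stmt_1_general {n : ℕ}
    (K : Set (EuclideanSpace ℝ (Fin n)))
    (hKconv : Convex ℝ K)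
    (G : EuclideanSpace ℝ (Fin n) → ℝ) (hG : ConvexOn ℝ K G)
    (fgrad : EuclideanSpace ℝ (Fin n) → EuclideanSpace ℝ (Fin n))
    (ft : EuclideanSpace ℝ (Fin n) → EuclideanSpace ℝ (Fin n) → ℝ)
    (ftgrad : EuclideanSpace ℝ (Fin n) → EuclideanSpace ℝ (Fin n) →
      EuclideanSpace ℝ (Fin n))
    (μ : ℝ)
    (hstrong : ∀ z ∈ K, StrongConvexOn K μ (fun w => ft w z))
    (hftgrad : ∀ z ∈ K, ∀ w, HasGradientAt (fun w' => ft w' z) (ftgrad w z) w)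
    (hconsistent : ∀ z ∈ K, ftgrad z z = fgrad z)
    (x : EuclideanSpace ℝ (Fin n)) (hx : x ∈ K)
    (y : EuclideanSpace ℝ (Fin n))
    (xt : EuclideanSpace ℝ (Fin n)) (hxt : xt ∈ K)
    (hmin : ∀ w ∈ K,
      ft xt x + ⟪y - fgrad x, xt - x⟫ + G xt ≤
        ft w x + ⟪y - fgrad x, w - x⟫ + G w) :
    μ * ‖xt - x‖ ^ 2 ≤ -⟪xt - x, y⟫ + G x - G xt := by
  set u := y - fgrad x
  -- the subproblem objective, shifted by the constant `⟪u, x⟫`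
  have hobj : StrongConvexOn K μ ((fun w => ft w x) + (⇑(innerₛₗ ℝ u) + G)) :=
    (hstrong x hx).add_convexOn (((innerₛₗ ℝ u).convexOn hKconv).add hG)
  have hobj_min : IsMinOn ((fun w => ft w x) + (⇑(innerₛₗ ℝ u) + G)) K xt :=
    isMinOn_iff.2 fun w hw => by
      have := hmin w hw
      simp only [inner_sub_right] at this
      simp only [Pi.add_apply, innerₛₗ_apply_apply]
      linarith
  have hgrowth := hobj.add_sq_le_of_isMinOn hobj_min hxt hx
  have hfirst := (hstrong x hx).add_inner_add_sq_le hx hxt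
    (hconsistent x hx ▸ hftgrad x hx x)
  simp only [Pi.add_apply, innerₛₗ_apply_apply, norm_sub_rev x xt] at hgrowth
  simp only [u, inner_sub_left, inner_sub_right, real_inner_comm y] at hgrowth hfirst ⊢
  linarith

/-- the minimizer `x̃` of the strongly convex SCA subproblem
satisfies the strong-monotonicity inequality
`-(x̃ - x)ᵀ y + G x - G x̃ ≥ μ̃ ‖x̃ - x‖²`. -/
theorem stmt_1 {n : ℕ}
    (K : Set (EuclideanSpace ℝ (Fin n))) (hKne : K.Nonempty) (hKcl : IsClosed K)
    (hKconv : Convex ℝ K)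
    (G : EuclideanSpace ℝ (Fin n) → ℝ) (hG : ConvexOn ℝ K G)
    (f : EuclideanSpace ℝ (Fin n) → ℝ)
    (fgrad : EuclideanSpace ℝ (Fin n) → EuclideanSpace ℝ (Fin n))
    (hf : ∀ z ∈ K, HasGradientAt f (fgrad z) z)
    (ft : EuclideanSpace ℝ (Fin n) → EuclideanSpace ℝ (Fin n) → ℝ)
    (ftgrad : EuclideanSpace ℝ (Fin n) → EuclideanSpace ℝ (Fin n) →
      EuclideanSpace ℝ (Fin n))
    (μ : ℝ) (hμ : 0 < μ)
    (hstrong : ∀ z ∈ K, StrongConvexOn K μ (fun w => ft w z))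
    (hftgrad : ∀ z ∈ K, ∀ w, HasGradientAt (fun w' => ft w' z) (ftgrad w z) w)
    (hconsistent : ∀ z ∈ K, ftgrad z z = fgrad z)
    (x : EuclideanSpace ℝ (Fin n)) (hx : x ∈ K)
    (y : EuclideanSpace ℝ (Fin n))
    (xt : EuclideanSpace ℝ (Fin n)) (hxt : xt ∈ K)
    (hmin : ∀ w ∈ K,
      ft xt x + ⟪y - fgrad x, xt - x⟫ + G xt ≤
        ft w x + ⟪y - fgrad x, w - x⟫ + G w) :
    μ * ‖xt - x‖ ^ 2 ≤ -⟪xt - x, y⟫ + G x - G xt :=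
  stmt_1_general K hKconv G hG fgrad ft ftgrad μ hstrong hftgrad hconsistent x hx y xt hxt hmin
end

section
/- Let F be L-smooth, G convex on closed convex K, and suppose f̃ satisfies ∇₁f̃(x;x) = ∇f(x), f̃(·;x) is μ̃-strongly convex, and ∇₁f̃(·;x) is l̃-Lipschitz, with ∇f being l-Lipschitz. Let x ∈ K, y ∈ ℝⁿ, and x̃ = argmin_{w∈K}[f̃(w;x) + (y − ∇f(x))ᵀ(w−x) + G(w)]. Then the proximal residual satisfies ‖x − prox_G(x − ∇F(x))‖² ≤ 4(1 + (l + l̃)²)‖x̃ − x‖² + 5‖y − ∇F(x)‖², where prox_G(z) = argmin_{w∈K}[G(w) + ½‖w − z‖²]. -/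
/-!
Both `xt` and the prox point `p` minimise a differentiable function plus the convex `G` over the
convex set `K`, so each satisfies a first-order variational inequality. Testing the one of `xt`
at `p` and the one of `p` at `xt` and adding cancels `G`; with `∇₁f̃(x;x) = ∇f(x)` this gives
`0 ≤ ⟪v + (x - p), p - xt⟫` for `v = ∇₁f̃(xt;x) - ∇₁f̃(x;x) + (y - ∇F x)`. The identity
`‖d‖² + ‖v‖² - ‖u‖² = 2⟪v + u, d - u⟫ + ‖d - u - v‖²` turns this into
`‖x - p‖² ≤ ‖xt - x‖² + ‖v‖²`, and `‖v‖ ≤ l̃‖xt - x‖ + ‖y - ∇F x‖`.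
-/

open scoped RealInnerProductSpace
open Set

section FirstOrderOptimality

variable {E : Type*} [NormedAddCommGroup E] [NormedSpace ℝ E] {K : Set E} {φ G : E → ℝ}
  {φ' : E →L[ℝ] ℝ} {x w : E}

theorem IsMinOn.sub_le_of_hasFDerivAt_of_convexOn (hmin : IsMinOn (fun u => φ u + G u) K x)
    (hK : Convex ℝ K) (hG : ConvexOn ℝ K G) (hx : x ∈ K) (hφ : HasFDerivAt φ φ' x)
    (hw : w ∈ K) : G x - G w ≤ φ' (w - x) := by
  set h : ℝ → ℝ := fun t => φ (x + t • (w - x)) + t * (G w - G x)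
  have hline : ∀ t ∈ Icc (0 : ℝ) 1, x + t • (w - x) = (1 - t) • x + t • w := fun t _ => by
    module
  -- convexity of `G` bounds it by its chord, so `h` stays above `φ + G` along the segment
  have hmin_h : IsMinOn h (Icc 0 1) 0 := isMinOn_iff.2 fun t ht => by
    have hmem : x + t • (w - x) ∈ K := hline t ht ▸ hK hx hw (by linarith [ht.2]) ht.1 (by ring)
    have hchord : G (x + t • (w - x)) ≤ (1 - t) * G x + t * G w := by
      rw [hline t ht]; exact hG.2 hx hw (by linarith [ht.2]) ht.1 (by ring)
    have := isMinOn_iff.1 hmin _ hmem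
    simp only [h, zero_smul, add_zero, zero_mul]
    linarith
  have hderiv : HasDerivAt h (φ' (w - x) + (G w - G x)) 0 := by
    have hpath : HasDerivAt (fun t : ℝ => x + t • (w - x)) (w - x) 0 := by
      simpa using ((hasDerivAt_id (0 : ℝ)).smul_const (w - x)).const_add x
    have hφ0 : HasFDerivAt φ φ' (x + (0 : ℝ) • (w - x)) := by simpa using hφ
    exact (hφ0.comp_hasDerivAt 0 hpath).add (by simpa using (hasDerivAt_id (0 : ℝ)).mul_const _)
  have hcone : (1 : ℝ) - 0 ∈ posTangentConeAt (Icc (0 : ℝ) 1) 0 :=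
    sub_mem_posTangentConeAt_of_segment_subset (segment_eq_Icc zero_le_one).subset
  have := hmin_h.localize.hasFDerivWithinAt_nonneg hderiv.hasFDerivAt.hasFDerivWithinAt hcone
  simp only [sub_zero, ContinuousLinearMap.toSpanSingleton_apply, one_smul] at this
  linarith

end FirstOrderOptimality

section Gradient

variable {F : Type*} [NormedAddCommGroup F] [InnerProductSpace ℝ F] [CompleteSpace F]
  {K : Set F} {φ G : F → ℝ} {g x w : F}

theorem IsMinOn.sub_le_inner_of_hasGradientAt (hmin : IsMinOn (fun u => φ u + G u) K x)
    (hK : Convex ℝ K) (hG : ConvexOn ℝ K G) (hx : x ∈ K) (hφ : HasGradientAt φ g x)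
    (hw : w ∈ K) : G x - G w ≤ ⟪g, w - x⟫ :=
  hmin.sub_le_of_hasFDerivAt_of_convexOn hK hG hx hφ.hasFDerivAt hw

theorem HasGradientAt.add_inner_sub (hφ : HasGradientAt φ g x) (a b : F) :
    HasGradientAt (fun u => φ u + ⟪a, u - b⟫) (g + a) x := by
  rw [hasGradientAt_iff_hasFDerivAt] at hφ ⊢
  rw [map_add]
  refine hφ.add ?_
  simpa [inner_sub_right] using
    ((InnerProductSpace.toDual ℝ F a : F →L[ℝ] ℝ).hasFDerivAt (x := x)).sub_const ⟪a, b⟫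

theorem hasGradientAt_norm_sub_sq_div_two (z x : F) :
    HasGradientAt (fun u => ‖u - z‖ ^ 2 / 2) (x - z) x := by
  rw [hasGradientAt_iff_hasFDerivAt]
  simp_rw [div_eq_mul_inv]
  refine (((hasFDerivAt_id x).sub_const z).norm_sq.mul_const (2⁻¹ : ℝ)).congr_fderiv ?_
  ext u
  simp

theorem IsMinOn.inner_sub_le_of_prox {p z : F}
    (hmin : IsMinOn (fun u => G u + ‖u - z‖ ^ 2 / 2) K p) (hK : Convex ℝ K)
    (hG : ConvexOn ℝ K G) (hp : p ∈ K) (hw : w ∈ K) : ⟪z - p, w - p⟫ ≤ G w - G p := by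
  have hmin' : IsMinOn (fun u => ‖u - z‖ ^ 2 / 2 + G u) K p := by
    simpa only [add_comm] using hmin
  have := hmin'.sub_le_inner_of_hasGradientAt hK hG hp (hasGradientAt_norm_sub_sq_div_two z p) hw
  rw [← neg_sub z p, inner_neg_left] at this
  linarith

end Gradient

theorem norm_sq_le_add_of_inner_nonneg {F : Type*} [NormedAddCommGroup F] [InnerProductSpace ℝ F]
    {u v d : F} (h : 0 ≤ ⟪v + u, d - u⟫) : ‖u‖ ^ 2 ≤ ‖d‖ ^ 2 + ‖v‖ ^ 2 := by
  have hid : ‖d - u - v‖ ^ 2 = ‖d‖ ^ 2 + ‖v‖ ^ 2 - ‖u‖ ^ 2 - 2 * ⟪v + u, d - u⟫ := by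
    simp only [← real_inner_self_eq_norm_sq, inner_sub_left, inner_sub_right, inner_add_left,
      real_inner_comm u v, real_inner_comm d u, real_inner_comm d v]
    ring
  nlinarith [sq_nonneg ‖d - u - v‖]

theorem stmt_2_general {n : ℕ}
    (K : Set (EuclideanSpace ℝ (Fin n)))
    (hKconv : Convex ℝ K)
    (G : EuclideanSpace ℝ (Fin n) → ℝ) (hG : ConvexOn ℝ K G)
    (fgrad Fgrad : EuclideanSpace ℝ (Fin n) → EuclideanSpace ℝ (Fin n))
    (l lt : ℝ)
    (hflip : ∀ z w, ‖fgrad z - fgrad w‖ ≤ l * ‖z - w‖)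
    (ft : EuclideanSpace ℝ (Fin n) → EuclideanSpace ℝ (Fin n) → ℝ)
    (ftgrad : EuclideanSpace ℝ (Fin n) → EuclideanSpace ℝ (Fin n) →
      EuclideanSpace ℝ (Fin n))
    (hftgrad : ∀ z ∈ K, ∀ w, HasGradientAt (fun w' => ft w' z) (ftgrad w z) w)
    (hconsistent : ∀ z ∈ K, ftgrad z z = fgrad z)
    (hftlip : ∀ z w w', ‖ftgrad w z - ftgrad w' z‖ ≤ lt * ‖w - w'‖)
    (x : EuclideanSpace ℝ (Fin n)) (hx : x ∈ K)
    (y : EuclideanSpace ℝ (Fin n))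
    (xt : EuclideanSpace ℝ (Fin n)) (hxt : xt ∈ K)
    (hmin : ∀ w ∈ K,
      ft xt x + ⟪y - fgrad x, xt - x⟫ + G xt ≤
        ft w x + ⟪y - fgrad x, w - x⟫ + G w)
    (p : EuclideanSpace ℝ (Fin n)) (hp : p ∈ K)
    (hprox : ∀ w ∈ K,
      G p + ‖p - (x - Fgrad x)‖ ^ 2 / 2 ≤ G w + ‖w - (x - Fgrad x)‖ ^ 2 / 2) :
    ‖x - p‖ ^ 2 ≤ 4 * (1 + (l + lt) ^ 2) * ‖xt - x‖ ^ 2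
      + 5 * ‖y - Fgrad x‖ ^ 2 := by
  have hsca : G xt - G p ≤ ⟪ftgrad xt x + (y - fgrad x), p - xt⟫ :=
    (isMinOn_iff.2 hmin).sub_le_inner_of_hasGradientAt hKconv hG hxt
      ((hftgrad x hx xt).add_inner_sub _ _) hp
  have hprox_xt : ⟪x - Fgrad x - p, xt - p⟫ ≤ G xt - G p :=
    (isMinOn_iff.2 hprox).inner_sub_le_of_prox hKconv hG hp hxt
  set v := ftgrad xt x - ftgrad x x + (y - Fgrad x) with hv_def
  have hvi : 0 ≤ ⟪v + (x - p), (x - xt) - (x - p)⟫ := by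
    have hsplit : v + (x - p) = ftgrad xt x + (y - fgrad x) + (x - Fgrad x - p) := by
      rw [hv_def, hconsistent x hx]; abel
    have hreverse : ⟪x - Fgrad x - p, p - xt⟫ = -⟪x - Fgrad x - p, xt - p⟫ := by
      rw [← inner_neg_right, neg_sub]
    rw [hsplit, sub_sub_sub_cancel_left, inner_add_left, hreverse]
    linarith
  have hv : ‖v‖ ≤ lt * ‖xt - x‖ + ‖y - Fgrad x‖ :=
    (norm_add_le _ _).trans (by gcongr; exact hftlip x xt x)
  have hl : 0 ≤ l * ‖xt - x‖ := (norm_nonneg _).trans (hflip xt x)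
  have hlt : 0 ≤ lt * ‖xt - x‖ := (norm_nonneg _).trans (hftlip x xt x)
  calc ‖x - p‖ ^ 2 ≤ ‖x - xt‖ ^ 2 + ‖v‖ ^ 2 := norm_sq_le_add_of_inner_nonneg hvi
    _ ≤ ‖xt - x‖ ^ 2 + (lt * ‖xt - x‖ + ‖y - Fgrad x‖) ^ 2 := by
      rw [norm_sub_rev]; gcongr
    _ ≤ 4 * (1 + (l + lt) ^ 2) * ‖xt - x‖ ^ 2 + 5 * ‖y - Fgrad x‖ ^ 2 := by
      nlinarith [mul_nonneg hl hlt, sq_nonneg (lt * ‖xt - x‖ - ‖y - Fgrad x‖)]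

/-- bound on the proximal-gradient residual
`‖x - prox_G(x - ∇F(x))‖²` in terms of the SCA step length `‖x̃ - x‖²` and the
gradient-tracking error `‖y - ∇F(x)‖²`.  The point `p` is the prox point
`prox_G(x - ∇F(x))`, characterized as the minimizer of
`w ↦ G w + ½‖w - (x - ∇F x)‖²` over `K`, and `xt` is the minimizer of the SCA
subproblem. -/
theorem stmt_2 {n : ℕ}
    (K : Set (EuclideanSpace ℝ (Fin n))) (hKne : K.Nonempty) (hKcl : IsClosed K)
    (hKconv : Convex ℝ K)
    (G : EuclideanSpace ℝ (Fin n) → ℝ) (hG : ConvexOn ℝ K G)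
    (f F : EuclideanSpace ℝ (Fin n) → ℝ)
    (fgrad Fgrad : EuclideanSpace ℝ (Fin n) → EuclideanSpace ℝ (Fin n))
    (l lt L μ : ℝ) (hμ : 1 ≤ μ)
    (hf : ∀ z ∈ K, HasGradientAt f (fgrad z) z)
    (hF : ∀ z ∈ K, HasGradientAt F (Fgrad z) z)
    (hflip : ∀ z w, ‖fgrad z - fgrad w‖ ≤ l * ‖z - w‖)
    (hFlip : ∀ z w, ‖Fgrad z - Fgrad w‖ ≤ L * ‖z - w‖)
    (ft : EuclideanSpace ℝ (Fin n) → EuclideanSpace ℝ (Fin n) → ℝ)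
    (ftgrad : EuclideanSpace ℝ (Fin n) → EuclideanSpace ℝ (Fin n) →
      EuclideanSpace ℝ (Fin n))
    (hstrong : ∀ z ∈ K, StrongConvexOn K μ (fun w => ft w z))
    (hftgrad : ∀ z ∈ K, ∀ w, HasGradientAt (fun w' => ft w' z) (ftgrad w z) w)
    (hconsistent : ∀ z ∈ K, ftgrad z z = fgrad z)
    (hftlip : ∀ z w w', ‖ftgrad w z - ftgrad w' z‖ ≤ lt * ‖w - w'‖)
    (x : EuclideanSpace ℝ (Fin n)) (hx : x ∈ K)
    (y : EuclideanSpace ℝ (Fin n))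
    (xt : EuclideanSpace ℝ (Fin n)) (hxt : xt ∈ K)
    (hmin : ∀ w ∈ K,
      ft xt x + ⟪y - fgrad x, xt - x⟫ + G xt ≤
        ft w x + ⟪y - fgrad x, w - x⟫ + G w)
    (p : EuclideanSpace ℝ (Fin n)) (hp : p ∈ K)
    (hprox : ∀ w ∈ K,
      G p + ‖p - (x - Fgrad x)‖ ^ 2 / 2 ≤ G w + ‖w - (x - Fgrad x)‖ ^ 2 / 2) :
    ‖x - p‖ ^ 2 ≤ 4 * (1 + (l + lt) ^ 2) * ‖xt - x‖ ^ 2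
      + 5 * ‖y - Fgrad x‖ ^ 2 :=
  stmt_2_general K hKconv G hG fgrad Fgrad l lt hflip ft ftgrad hftgrad hconsistent hftlip x hx y xt
    hxt hmin p hp hprox
end

section
/- Let {W^k} be a sequence of row-stochastic S × S matrices such that there exist C₂ > 0, ρ ∈ (0,1), and stochastic vectors ψ^k with ‖W^{ℓ:t} − 1(ψ^t)ᵀ‖₂ ≤ C₂ρ^{ℓ−t} for all ℓ ≥ t ≥ 0, where W^{ℓ:t} = W^ℓ⋯W^t. Then (ψ^{t+1})ᵀ W^t = (ψ^t)ᵀ for all t ≥ 0. -/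
/-- Backward product of matrices: `Wprod W t m = W (t+m-1) * ⋯ * W (t+1) * W t`
(with `m` factors), so that `W^{ℓ:t} = Wprod W t (ℓ - t + 1)` for `ℓ ≥ t`. -/
def Wprod {S : ℕ} (W : ℕ → Matrix (Fin S) (Fin S) ℝ) (t : ℕ) :
    ℕ → Matrix (Fin S) (Fin S) ℝ
  | 0 => 1
  | m + 1 => W (t + m) * Wprod W t m

/-- The spectral (ℓ₂-operator) norm of a real matrix, via its action on
Euclidean space. -/
noncomputable def l2OpNorm {S : ℕ} (A : Matrix (Fin S) (Fin S) ℝ) : ℝ :=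
  ‖LinearMap.toContinuousLinearMap (Matrix.toEuclideanLin A)‖

open Filter Topology Matrix

lemma l2OpNorm_nonneg {S : ℕ} (A : Matrix (Fin S) (Fin S) ℝ) : 0 ≤ l2OpNorm A :=
  norm_nonneg _

lemma tendsto_of_l2OpNorm_sub_tendsto_zero {S : ℕ} {A : ℕ → Matrix (Fin S) (Fin S) ℝ}
    {B : Matrix (Fin S) (Fin S) ℝ} (h : Tendsto (fun n => l2OpNorm (A n - B)) atTop (𝓝 0)) :
    Tendsto A atTop (𝓝 B) := by
  let e : Matrix (Fin S) (Fin S) ℝ ≃ₗ[ℝ] (EuclideanSpace ℝ (Fin S) →L[ℝ] EuclideanSpace ℝ (Fin S)) :=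
    toEuclideanCLM.toAlgEquiv.toLinearEquiv
  have hclm : Tendsto (fun n => e (A n)) atTop (𝓝 (e B)) := by
    rw [tendsto_iff_norm_sub_tendsto_zero]
    simp only [← map_sub]
    exact h
  have he_symm := LinearMap.continuous_of_finiteDimensional (𝕜 := ℝ) e.symm.toLinearMap
  simpa [Function.comp_def] using (he_symm.tendsto _).comp hclm

lemma Wprod_succ_eq_mul {S : ℕ} (W : ℕ → Matrix (Fin S) (Fin S) ℝ) (t m : ℕ) :
    Wprod W t (m + 1) = Wprod W (t + 1) m * W t := by
  induction m with
  | zero => simp [Wprod]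
  | succ m ih =>
    rw [Wprod, ih, Wprod, Matrix.mul_assoc, Nat.add_right_comm t 1 m, Nat.add_assoc]

lemma tendsto_of_l2OpNorm_sub_le_geometric {S : ℕ} {A : ℕ → Matrix (Fin S) (Fin S) ℝ}
    {B : Matrix (Fin S) (Fin S) ℝ} {C ρ : ℝ} (hρ0 : 0 ≤ ρ) (hρ1 : ρ < 1)
    (h : ∀ n, l2OpNorm (A n - B) ≤ C * ρ ^ n) :
    Tendsto A atTop (𝓝 B) := by
  refine tendsto_of_l2OpNorm_sub_tendsto_zero (squeeze_zero (fun n => l2OpNorm_nonneg _) h ?_)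
  simpa using (tendsto_pow_atTop_nhds_zero_of_lt_one hρ0 hρ1).const_mul C

lemma tendsto_Wprod_replicateRow {S : ℕ} {W : ℕ → Matrix (Fin S) (Fin S) ℝ}
    {ψ : ℕ → Fin S → ℝ} {C ρ : ℝ} (hρ0 : 0 ≤ ρ) (hρ1 : ρ < 1)
    (hmix : ∀ t ℓ : ℕ, t ≤ ℓ →
      l2OpNorm (Wprod W t (ℓ - t + 1) - replicateRow (Fin S) (ψ t)) ≤ C * ρ ^ (ℓ - t))
    (t : ℕ) :
    Tendsto (fun n => Wprod W t (n + 1)) atTop (𝓝 (replicateRow (Fin S) (ψ t))) :=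
  tendsto_of_l2OpNorm_sub_le_geometric hρ0 hρ1 fun n => by
    simpa using hmix t (t + n) (Nat.le_add_right t n)

theorem stmt_4_general {S : ℕ}
    (W : ℕ → Matrix (Fin S) (Fin S) ℝ)
    (ψ : ℕ → Fin S → ℝ)
    (C₂ ρ : ℝ) (hρ0 : 0 < ρ) (hρ1 : ρ < 1)
    (hmix : ∀ t ℓ : ℕ, t ≤ ℓ →
      l2OpNorm (Wprod W t (ℓ - t + 1) - Matrix.of fun _ j => ψ t j) ≤
        C₂ * ρ ^ (ℓ - t)) :
    ∀ t, Matrix.vecMul (ψ (t + 1)) (W t) = ψ t := by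
  intro t
  have hlim := tendsto_Wprod_replicateRow hρ0.le hρ1 hmix
  -- `W^{ℓ:t} = W^{ℓ:t+1} W^t`, and the two sides converge to `1 (ψ^t)ᵀ` and `1 (ψ^{t+1})ᵀ W^t`.
  have hleft := (hlim t).comp (tendsto_add_atTop_nat 1)
  have hright := (hlim (t + 1)).mul_const (W t)
  simp only [Function.comp_def, Wprod_succ_eq_mul W t] at hleft
  rw [← replicateRow_vecMul] at hright
  have hrow := tendsto_nhds_unique hright hleft
  rcases isEmpty_or_nonempty (Fin S) with hS | hS
  · exact funext hS.elim
  · exact replicateRow_injective hrow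

/-- if the backward products of the row-stochastic matrices `W^k`
converge geometrically (in spectral norm) to the rank-one matrices `1 (ψ^t)ᵀ`,
then `(ψ^{t+1})ᵀ W^t = (ψ^t)ᵀ` for all `t`. -/
theorem stmt_4 {S : ℕ}
    (W : ℕ → Matrix (Fin S) (Fin S) ℝ)
    (hWnn : ∀ k i j, 0 ≤ W k i j)
    (hWrow : ∀ k i, ∑ j, W k i j = 1)
    (ψ : ℕ → Fin S → ℝ)
    (hψnn : ∀ t i, 0 ≤ ψ t i)
    (hψsum : ∀ t, ∑ i, ψ t i = 1)
    (C₂ ρ : ℝ) (hC₂ : 0 < C₂) (hρ0 : 0 < ρ) (hρ1 : ρ < 1)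
    (hmix : ∀ t ℓ : ℕ, t ≤ ℓ →
      l2OpNorm (Wprod W t (ℓ - t + 1) - Matrix.of fun _ j => ψ t j) ≤
        C₂ * ρ ^ (ℓ - t)) :
    ∀ t, Matrix.vecMul (ψ (t + 1)) (W t) = ψ t :=
  stmt_4_general W ψ C₂ ρ hρ0 hρ1 hmix
end

section
/- Let {H^k} in ℝ^{S×n} evolve as H^{k+1} = W^k(H^k + γΔ^k), where each W^k is row-stochastic and satisfies ‖W^{ℓ:t} − 1(ψ^t)ᵀ‖₂ ≤ C₂ρ^{ℓ−t} for stochastic vectors ψ^t, ρ ∈ (0,1). Define z̄^k = (ψ^k)ᵀH^k and E^k = ‖H^k − 1·z̄^k‖_F. Then E^{k+1} ≤ C₂ρ^k E^0 + C₂ ∑_{l=0}^{k} ρ^{k−l} γ‖Δ^l‖_F for all k ≥ 0. -/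
/-- The Frobenius norm of a real matrix. -/
noncomputable def froNorm {S n : ℕ} (A : Matrix (Fin S) (Fin n) ℝ) : ℝ :=
  Real.sqrt (∑ i, ∑ j, A i j ^ 2)

namespace Matrix
open scoped Norms.Frobenius
variable {l m n : Type*} [Fintype l] [Fintype m] [Fintype n]

theorem frobenius_norm_sq_eq_sum_rows {α : Type*} [SeminormedAddCommGroup α]
    (M : Matrix m n α) :
    ‖M‖ ^ 2 = ∑ i, ‖WithLp.toLp 2 (M i)‖ ^ 2 :=
  PiLp.norm_sq_eq_of_L2 _ (WithLp.toLp 2 fun i => WithLp.toLp 2 (M i))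

theorem frobenius_norm_mul_le {𝕜 : Type*} [RCLike 𝕜] [DecidableEq m]
    (A : Matrix l m 𝕜) (B : Matrix m n 𝕜) :
    ‖A * B‖ ≤ ‖(toEuclideanLin A).toContinuousLinearMap‖ * ‖B‖ := by
  set T := (toEuclideanLin A).toContinuousLinearMap
  have hcol : ∀ j, WithLp.toLp 2 ((A * B)ᵀ j) = T (WithLp.toLp 2 (Bᵀ j)) := fun _ => rfl
  refine pow_le_pow_iff_left₀ (norm_nonneg _) (by positivity) two_ne_zero |>.mp ?_
  calc ‖A * B‖ ^ 2 = ∑ j, ‖T (WithLp.toLp 2 (Bᵀ j))‖ ^ 2 := by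
        rw [← frobenius_norm_transpose (A * B), frobenius_norm_sq_eq_sum_rows]; simp_rw [hcol]
    _ ≤ ∑ j, (‖T‖ * ‖WithLp.toLp 2 (Bᵀ j)‖) ^ 2 := by
        gcongr; exact T.le_opNorm _
    _ = (‖T‖ * ‖B‖) ^ 2 := by
        rw [mul_pow, ← frobenius_norm_transpose B, frobenius_norm_sq_eq_sum_rows, Finset.mul_sum]
        simp_rw [mul_pow]

end Matrix

section froNorm
open scoped Matrix.Norms.Frobenius
variable {S n : ℕ}

theorem froNorm_eq_frobenius_norm (A : Matrix (Fin S) (Fin n) ℝ) : froNorm A = ‖A‖ := by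
  rw [froNorm, Matrix.frobenius_norm_def, Real.sqrt_eq_rpow]
  simp [Real.norm_eq_abs, sq_abs]

theorem froNorm_add_le (A B : Matrix (Fin S) (Fin n) ℝ) :
    froNorm (A + B) ≤ froNorm A + froNorm B := by
  simpa only [froNorm_eq_frobenius_norm] using norm_add_le A B

theorem froNorm_sum_le {ι : Type*} (s : Finset ι) (A : ι → Matrix (Fin S) (Fin n) ℝ) :
    froNorm (∑ l ∈ s, A l) ≤ ∑ l ∈ s, froNorm (A l) := by
  simpa only [froNorm_eq_frobenius_norm] using norm_sum_le s A

theorem froNorm_smul (c : ℝ) (A : Matrix (Fin S) (Fin n) ℝ) :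
    froNorm (c • A) = |c| * froNorm A := by
  rw [froNorm_eq_frobenius_norm, froNorm_eq_frobenius_norm, norm_smul, Real.norm_eq_abs]

theorem froNorm_mul_le_of_l2OpNorm_le {A : Matrix (Fin S) (Fin S) ℝ} {c : ℝ}
    (hA : l2OpNorm A ≤ c) (B : Matrix (Fin S) (Fin n) ℝ) : froNorm (A * B) ≤ c * froNorm B := by
  rw [froNorm_eq_frobenius_norm, froNorm_eq_frobenius_norm]
  exact (Matrix.frobenius_norm_mul_le A B).trans (by gcongr; exact hA)

end froNorm

namespace Matrix
variable {α : Type*} [NonAssocSemiring α] {ι m n : Type*} [Fintype n]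

theorem mul_replicateRow_of_sum_eq_one (M : Matrix m n α) (hM : ∀ i, ∑ j, M i j = 1)
    (v : ι → α) : M * replicateRow n v = replicateRow m v := by
  ext i j
  simp only [mul_apply, replicateRow_apply, ← Finset.sum_mul, hM, one_mul]

end Matrix

open Matrix

section Consensus
variable {S n : ℕ} (W : ℕ → Matrix (Fin S) (Fin S) ℝ)

theorem Wprod_mul_replicateRow (hWrow : ∀ k i, ∑ j, W k i j = 1) (t m : ℕ) {ι : Type*}
    (v : ι → ℝ) : Wprod W t m * replicateRow (Fin S) v = replicateRow (Fin S) v := by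
  induction m with
  | zero => exact Matrix.one_mul _
  | succ m ih =>
    rw [Wprod, Matrix.mul_assoc, ih, mul_replicateRow_of_sum_eq_one _ (hWrow _)]

theorem vecMul_Wprod {ψ : ℕ → Fin S → ℝ} (hψW : ∀ t, ψ (t + 1) ᵥ* W t = ψ t) (t m : ℕ) :
    ψ (t + m) ᵥ* Wprod W t m = ψ t := by
  induction m with
  | zero => exact vecMul_one _
  | succ m ih => rw [Wprod, ← vecMul_vecMul, ← add_assoc, hψW, ih]

theorem replicateRow_mul_Wprod {ψ : ℕ → Fin S → ℝ} (hψW : ∀ t, ψ (t + 1) ᵥ* W t = ψ t)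
    {l k : ℕ} (hlk : l ≤ k) :
    replicateRow (Fin S) (ψ k) * Wprod W l (k - l) = replicateRow (Fin S) (ψ l) := by
  rw [← replicateRow_vecMul, ← vecMul_Wprod W hψW l (k - l), Nat.add_sub_cancel' hlk]

theorem eq_Wprod_mul_add_sum {H u : ℕ → Matrix (Fin S) (Fin n) ℝ}
    (hdyn : ∀ k, H (k + 1) = W k * (H k + u k)) (k : ℕ) :
    H k = Wprod W 0 k * H 0 + ∑ l ∈ Finset.range k, Wprod W l (k - l) * u l := by
  induction k with
  | zero => simp [Wprod]
  | succ k ih =>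
    have hstep : ∀ l ∈ Finset.range k, W k * (Wprod W l (k - l) * u l)
        = Wprod W l (k + 1 - l) * u l := fun l hl => by
      rw [← Matrix.mul_assoc, Nat.sub_add_comm (Finset.mem_range_le hl), Wprod,
        Nat.add_sub_cancel' (Finset.mem_range_le hl)]
    rw [hdyn, ih, Finset.sum_range_succ, Nat.add_sub_cancel_left,
      show Wprod W k 1 = W k from Matrix.mul_one _, Wprod, zero_add, Matrix.mul_add,
      Matrix.mul_add, Matrix.mul_sum, Finset.sum_congr rfl hstep, Matrix.mul_assoc, add_assoc]

theorem consensusError_eq (hWrow : ∀ k i, ∑ j, W k i j = 1) {ψ : ℕ → Fin S → ℝ}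
    (hψsum : ∀ t, ∑ i, ψ t i = 1) (hψW : ∀ t, ψ (t + 1) ᵥ* W t = ψ t)
    {H u : ℕ → Matrix (Fin S) (Fin n) ℝ} (hdyn : ∀ k, H (k + 1) = W k * (H k + u k)) (k : ℕ) :
    H k - replicateRow (Fin S) (ψ k ᵥ* H k) =
      (Wprod W 0 k - replicateRow (Fin S) (ψ 0)) * (H 0 - replicateRow (Fin S) (ψ 0 ᵥ* H 0))
        + ∑ l ∈ Finset.range k, (Wprod W l (k - l) - replicateRow (Fin S) (ψ l)) * u l := by
  have hWJ : Wprod W 0 k * replicateRow (Fin S) (ψ 0) = replicateRow (Fin S) (ψ 0) :=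
    Wprod_mul_replicateRow W hWrow 0 k _
  have hJJ :
      replicateRow (Fin S) (ψ 0) * replicateRow (Fin S) (ψ 0) = replicateRow (Fin S) (ψ 0) :=
    mul_replicateRow_of_sum_eq_one _ (fun _ => hψsum 0) _
  have hJW0 : replicateRow (Fin S) (ψ k) * Wprod W 0 k = replicateRow (Fin S) (ψ 0) := by
    simpa using replicateRow_mul_Wprod W hψW (Nat.zero_le k)
  have hJWl : ∀ l ∈ Finset.range k, replicateRow (Fin S) (ψ k) * (Wprod W l (k - l) * u l)
      = replicateRow (Fin S) (ψ l) * u l := fun l hl => by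
    rw [← Matrix.mul_assoc, replicateRow_mul_Wprod W hψW (Finset.mem_range_le hl)]
  rw [replicateRow_vecMul, replicateRow_vecMul, eq_Wprod_mul_add_sum W hdyn k, Matrix.mul_add,
    Matrix.mul_sum, ← Matrix.mul_assoc, hJW0, Finset.sum_congr rfl hJWl, Matrix.sub_mul,
    Matrix.mul_sub, Matrix.mul_sub, ← Matrix.mul_assoc, ← Matrix.mul_assoc, hWJ, hJJ]
  simp only [Matrix.sub_mul, Finset.sum_sub_distrib]
  abel

end Consensus

theorem stmt_5_general {S n : ℕ}
    (W : ℕ → Matrix (Fin S) (Fin S) ℝ)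
    (hWrow : ∀ k i, ∑ j, W k i j = 1)
    (ψ : ℕ → Fin S → ℝ)
    (hψsum : ∀ t, ∑ i, ψ t i = 1)
    (C₂ ρ : ℝ)
    (hmix : ∀ t ℓ : ℕ, t ≤ ℓ →
      l2OpNorm (Wprod W t (ℓ - t + 1) - Matrix.of fun _ j => ψ t j) ≤
        C₂ * ρ ^ (ℓ - t))
    (hψW : ∀ t, Matrix.vecMul (ψ (t + 1)) (W t) = ψ t)
    (γ : ℝ) (hγ : 0 < γ)
    (H Δ : ℕ → Matrix (Fin S) (Fin n) ℝ)
    (hdyn : ∀ k, H (k + 1) = W k * (H k + γ • Δ k)) :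
    ∀ k : ℕ,
      froNorm (H (k + 1) -
          Matrix.of fun _ j => Matrix.vecMul (ψ (k + 1)) (H (k + 1)) j) ≤
        C₂ * ρ ^ k *
            froNorm (H 0 - Matrix.of fun _ j => Matrix.vecMul (ψ 0) (H 0) j)
          + C₂ * ∑ l ∈ Finset.range (k + 1), ρ ^ (k - l) * γ * froNorm (Δ l) := by
  intro k
  have hinit : froNorm ((Wprod W 0 (k + 1) - replicateRow (Fin S) (ψ 0)) *
      (H 0 - replicateRow (Fin S) (ψ 0 ᵥ* H 0))) ≤
      C₂ * ρ ^ k * froNorm (H 0 - replicateRow (Fin S) (ψ 0 ᵥ* H 0)) :=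
    froNorm_mul_le_of_l2OpNorm_le (hmix 0 k k.zero_le) _
  have hpert : ∀ l ∈ Finset.range (k + 1),
      froNorm ((Wprod W l (k + 1 - l) - replicateRow (Fin S) (ψ l)) * (γ • Δ l)) ≤
        C₂ * (ρ ^ (k - l) * γ * froNorm (Δ l)) := fun l hl => by
    have hlk := Finset.mem_range_succ_iff.mp hl
    rw [Matrix.mul_smul, froNorm_smul, abs_of_pos hγ, Nat.sub_add_comm hlk]
    calc γ * froNorm ((Wprod W l (k - l + 1) - replicateRow (Fin S) (ψ l)) * Δ l)
        ≤ γ * (C₂ * ρ ^ (k - l) * froNorm (Δ l)) := by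
          gcongr; exact froNorm_mul_le_of_l2OpNorm_le (hmix l k hlk) _
      _ = C₂ * (ρ ^ (k - l) * γ * froNorm (Δ l)) := by ring
  rw [Finset.mul_sum]
  calc froNorm (H (k + 1) - replicateRow (Fin S) (ψ (k + 1) ᵥ* H (k + 1)))
      = froNorm ((Wprod W 0 (k + 1) - replicateRow (Fin S) (ψ 0)) *
          (H 0 - replicateRow (Fin S) (ψ 0 ᵥ* H 0)) + ∑ l ∈ Finset.range (k + 1),
            (Wprod W l (k + 1 - l) - replicateRow (Fin S) (ψ l)) * (γ • Δ l)) := by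
        rw [consensusError_eq W hWrow hψsum hψW hdyn (k + 1)]
    _ ≤ _ := (froNorm_add_le _ _).trans
        (add_le_add hinit ((froNorm_sum_le _ _).trans (Finset.sum_le_sum hpert)))

/-- geometric decay of the consensus error for the perturbed
consensus dynamics `H^{k+1} = W^k (H^k + γ Δ^k)`, where
`z̄^k = (ψ^k)ᵀ H^k` and `E^k = ‖H^k − 1 (z̄^k)ᵀ‖_F`. -/
theorem stmt_5 {S n : ℕ}
    (W : ℕ → Matrix (Fin S) (Fin S) ℝ)
    (hWnn : ∀ k i j, 0 ≤ W k i j)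
    (hWrow : ∀ k i, ∑ j, W k i j = 1)
    (ψ : ℕ → Fin S → ℝ)
    (hψnn : ∀ t i, 0 ≤ ψ t i)
    (hψsum : ∀ t, ∑ i, ψ t i = 1)
    (C₂ ρ : ℝ) (hC₂ : 0 < C₂) (hρ0 : 0 < ρ) (hρ1 : ρ < 1)
    (hmix : ∀ t ℓ : ℕ, t ≤ ℓ →
      l2OpNorm (Wprod W t (ℓ - t + 1) - Matrix.of fun _ j => ψ t j) ≤
        C₂ * ρ ^ (ℓ - t))
    (hψW : ∀ t, Matrix.vecMul (ψ (t + 1)) (W t) = ψ t)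
    (γ : ℝ) (hγ : 0 < γ)
    (H Δ : ℕ → Matrix (Fin S) (Fin n) ℝ)
    (hdyn : ∀ k, H (k + 1) = W k * (H k + γ • Δ k)) :
    ∀ k : ℕ,
      froNorm (H (k + 1) -
          Matrix.of fun _ j => Matrix.vecMul (ψ (k + 1)) (H (k + 1)) j) ≤
        C₂ * ρ ^ k *
            froNorm (H 0 - Matrix.of fun _ j => Matrix.vecMul (ψ 0) (H 0) j)
          + C₂ * ∑ l ∈ Finset.range (k + 1), ρ ^ (k - l) * γ * froNorm (Δ l) :=
  stmt_5_general W hWrow ψ hψsum C₂ ρ hmix hψW γ hγ H Δ hdyn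
end

section
/- Suppose nonnegative sequences E_x^k and d^k satisfy E_x^{k+1} ≤ C₂ρ^k E_x^0 + C₂∑_{l=0}^{k} ρ^{k−l} γ d^l with ρ ∈ (0,1), C₂, γ > 0. Then for every k ≥ 1, ∑_{t=0}^{k} (E_x^t)² ≤ c_x + (2C₂²/(1−ρ)²) · ∑_{t=0}^{k} γ²(d^t)², where c_x is a constant depending only on C₂, ρ, and E_x^0. -/
private lemma geo_bound {ρ : ℝ} (hρ0 : 0 ≤ ρ) (hρ1 : ρ < 1) (n : ℕ) :
    ∑ i ∈ Finset.range n, ρ ^ i ≤ 1 / (1 - ρ) := by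
  have h1 : (0:ℝ) < 1 - ρ := by linarith
  rw [geom_sum_eq (by linarith : ρ ≠ 1)]
  have heq : (ρ ^ n - 1) / (ρ - 1) = (1 - ρ ^ n) / (1 - ρ) := by
    rw [div_eq_div_iff (by linarith) (by linarith)]
    ring
  rw [heq]
  have : 0 ≤ ρ ^ n := pow_nonneg hρ0 n
  gcongr
  linarith

/-- if `E^{k+1} ≤ C₂ ρ^k E^0 + C₂ ∑_{l=0}^k ρ^{k-l} γ d^l`, then
the sum of squares of `E` is bounded by a constant (depending only on
`C₂, ρ, E^0`; the explicit valid choice `c_x = (E⁰)² + 2C₂²(E⁰)²/(1-ρ²)` is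
used) plus `(2C₂²/(1-ρ)²) ∑ γ²(d^t)²`. -/
theorem stmt_6 (E d : ℕ → ℝ)
    (hEnn : ∀ k, 0 ≤ E k) (hdnn : ∀ k, 0 ≤ d k)
    (C₂ ρ γ : ℝ) (hC₂ : 0 < C₂) (hρ0 : 0 < ρ) (hρ1 : ρ < 1) (hγ : 0 < γ)
    (hrec : ∀ k : ℕ, E (k + 1) ≤
      C₂ * ρ ^ k * E 0 + C₂ * ∑ l ∈ Finset.range (k + 1), ρ ^ (k - l) * γ * d l) :
    ∀ k : ℕ, 1 ≤ k →
      ∑ t ∈ Finset.range (k + 1), (E t) ^ 2 ≤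
        ((E 0) ^ 2 + 2 * C₂ ^ 2 * (E 0) ^ 2 / (1 - ρ ^ 2))
          + (2 * C₂ ^ 2 / (1 - ρ) ^ 2) *
              ∑ t ∈ Finset.range (k + 1), γ ^ 2 * (d t) ^ 2 := by
  intro K hK
  have hm : (0:ℝ) < 1 - ρ := by linarith
  have hm2 : (0:ℝ) < 1 - ρ ^ 2 := by nlinarith
  set A : ℕ → ℝ := fun k => C₂ * ρ ^ k * E 0 with hA
  set B : ℕ → ℝ := fun k =>
    C₂ * ∑ l ∈ Finset.range (k + 1), ρ ^ (k - l) * γ * d l with hB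
  -- split off E 0
  rw [Finset.sum_range_succ' (fun t => (E t) ^ 2) K]
  -- pointwise bound on squares
  have hpt : ∀ k, (E (k + 1)) ^ 2 ≤ 2 * (A k) ^ 2 + 2 * (B k) ^ 2 := by
    intro k
    have h1 : E (k + 1) ≤ A k + B k := hrec k
    have h2 : (E (k + 1)) ^ 2 ≤ (A k + B k) ^ 2 :=
      pow_le_pow_left₀ (hEnn _) h1 2
    nlinarith [sq_nonneg (A k - B k)]
  have hsum1 : ∑ k ∈ Finset.range K, (E (k + 1)) ^ 2 ≤
      ∑ k ∈ Finset.range K, (2 * (A k) ^ 2 + 2 * (B k) ^ 2) :=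
    Finset.sum_le_sum fun k _ => hpt k
  rw [Finset.sum_add_distrib] at hsum1
  -- bound on the A part
  have hAbd : ∑ k ∈ Finset.range K, 2 * (A k) ^ 2 ≤
      2 * C₂ ^ 2 * (E 0) ^ 2 / (1 - ρ ^ 2) := by
    have hcalc : ∑ k ∈ Finset.range K, 2 * (A k) ^ 2 =
        2 * C₂ ^ 2 * (E 0) ^ 2 * ∑ k ∈ Finset.range K, (ρ ^ 2) ^ k := by
      rw [Finset.mul_sum]
      refine Finset.sum_congr rfl fun k _ => ?_
      simp only [hA]
      rw [← pow_mul, mul_comm 2 k, pow_mul]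
      ring
    rw [hcalc]
    have hg := geo_bound (by positivity : (0:ℝ) ≤ ρ ^ 2) (by nlinarith) K
    have hc : (0:ℝ) ≤ 2 * C₂ ^ 2 * (E 0) ^ 2 := by positivity
    calc 2 * C₂ ^ 2 * (E 0) ^ 2 * ∑ k ∈ Finset.range K, (ρ ^ 2) ^ k
        ≤ 2 * C₂ ^ 2 * (E 0) ^ 2 * (1 / (1 - ρ ^ 2)) := by
          exact mul_le_mul_of_nonneg_left hg hc
      _ = 2 * C₂ ^ 2 * (E 0) ^ 2 / (1 - ρ ^ 2) := by ring
  -- Cauchy-Schwarz on each B k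
  have hBk : ∀ k, (B k) ^ 2 ≤
      C₂ ^ 2 * (1 / (1 - ρ)) *
        ∑ l ∈ Finset.range (k + 1), ρ ^ (k - l) * (γ ^ 2 * (d l) ^ 2) := by
    intro k
    have hcs := Finset.sum_mul_sq_le_sq_mul_sq (Finset.range (k + 1))
      (fun l => Real.sqrt (ρ ^ (k - l)))
      (fun l => Real.sqrt (ρ ^ (k - l)) * (γ * d l))
    have hrw : ∀ l, Real.sqrt (ρ ^ (k - l)) * (Real.sqrt (ρ ^ (k - l)) * (γ * d l))
        = ρ ^ (k - l) * γ * d l := by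
      intro l
      rw [← mul_assoc, Real.mul_self_sqrt (by positivity)]
      ring
    have hrw2 : ∀ l, (Real.sqrt (ρ ^ (k - l))) ^ 2 = ρ ^ (k - l) := fun l =>
      Real.sq_sqrt (by positivity)
    have hrw3 : ∀ l, (Real.sqrt (ρ ^ (k - l)) * (γ * d l)) ^ 2
        = ρ ^ (k - l) * (γ ^ 2 * (d l) ^ 2) := by
      intro l
      rw [mul_pow, hrw2]
      ring
    simp only [hrw, hrw2, hrw3] at hcs
    have hgsum : ∑ l ∈ Finset.range (k + 1), ρ ^ (k - l) ≤ 1 / (1 - ρ) := by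
      have : ∑ l ∈ Finset.range (k + 1), ρ ^ (k - l)
          = ∑ j ∈ Finset.range (k + 1), ρ ^ j := by
        rw [← Finset.sum_range_reflect (fun j => ρ ^ j) (k + 1)]
        simp
      rw [this]
      exact geo_bound hρ0.le hρ1 (k + 1)
    have hnn : (0:ℝ) ≤ ∑ l ∈ Finset.range (k + 1), ρ ^ (k - l) * (γ ^ 2 * (d l) ^ 2) := by
      refine Finset.sum_nonneg fun l _ => ?_
      have := hdnn l
      positivity
    calc (B k) ^ 2 = C₂ ^ 2 * (∑ l ∈ Finset.range (k + 1), ρ ^ (k - l) * γ * d l) ^ 2 := by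
          simp only [hB]; ring
      _ ≤ C₂ ^ 2 * ((∑ l ∈ Finset.range (k + 1), ρ ^ (k - l)) *
            ∑ l ∈ Finset.range (k + 1), ρ ^ (k - l) * (γ ^ 2 * (d l) ^ 2)) := by
          exact mul_le_mul_of_nonneg_left hcs (by positivity)
      _ ≤ C₂ ^ 2 * ((1 / (1 - ρ)) *
            ∑ l ∈ Finset.range (k + 1), ρ ^ (k - l) * (γ ^ 2 * (d l) ^ 2)) := by
          refine mul_le_mul_of_nonneg_left ?_ (by positivity)
          exact mul_le_mul_of_nonneg_right hgsum hnn
      _ = C₂ ^ 2 * (1 / (1 - ρ)) *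
            ∑ l ∈ Finset.range (k + 1), ρ ^ (k - l) * (γ ^ 2 * (d l) ^ 2) := by ring
  -- sum of the double sums, swapped
  have hswap : ∑ k ∈ Finset.range K,
      ∑ l ∈ Finset.range (k + 1), ρ ^ (k - l) * (γ ^ 2 * (d l) ^ 2) ≤
      (1 / (1 - ρ)) * ∑ l ∈ Finset.range K, γ ^ 2 * (d l) ^ 2 := by
    have heq : ∑ k ∈ Finset.range K,
        ∑ l ∈ Finset.range (k + 1), ρ ^ (k - l) * (γ ^ 2 * (d l) ^ 2) =
        ∑ l ∈ Finset.range K,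
          ∑ k ∈ Finset.Ico l K, ρ ^ (k - l) * (γ ^ 2 * (d l) ^ 2) := by
      have h := Finset.sum_Ico_Ico_comm 0 K
        (fun l k => ρ ^ (k - l) * (γ ^ 2 * (d l) ^ 2))
      simp only [← Finset.range_eq_Ico] at h
      exact h.symm
    rw [heq, Finset.mul_sum]
    refine Finset.sum_le_sum fun l hl => ?_
    have hfac : ∑ k ∈ Finset.Ico l K, ρ ^ (k - l) * (γ ^ 2 * (d l) ^ 2)
        = (∑ k ∈ Finset.Ico l K, ρ ^ (k - l)) * (γ ^ 2 * (d l) ^ 2) := by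
      rw [Finset.sum_mul]
    rw [hfac]
    have hge : ∑ k ∈ Finset.Ico l K, ρ ^ (k - l) ≤ 1 / (1 - ρ) := by
      rw [Finset.sum_Ico_eq_sum_range]
      have : ∀ j ∈ Finset.range (K - l), ρ ^ (l + j - l) = ρ ^ j := by
        intro j _; congr 1; omega
      rw [Finset.sum_congr rfl this]
      exact geo_bound hρ0.le hρ1 (K - l)
    have hnn : (0:ℝ) ≤ γ ^ 2 * (d l) ^ 2 := by positivity
    exact mul_le_mul_of_nonneg_right hge hnn
  -- bound on the B part
  have hBbd : ∑ k ∈ Finset.range K, 2 * (B k) ^ 2 ≤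
      (2 * C₂ ^ 2 / (1 - ρ) ^ 2) * ∑ l ∈ Finset.range K, γ ^ 2 * (d l) ^ 2 := by
    calc ∑ k ∈ Finset.range K, 2 * (B k) ^ 2
        ≤ ∑ k ∈ Finset.range K, 2 * (C₂ ^ 2 * (1 / (1 - ρ)) *
            ∑ l ∈ Finset.range (k + 1), ρ ^ (k - l) * (γ ^ 2 * (d l) ^ 2)) := by
          refine Finset.sum_le_sum fun k _ => ?_
          have := hBk k
          linarith
      _ = 2 * C₂ ^ 2 * (1 / (1 - ρ)) * ∑ k ∈ Finset.range K,
            ∑ l ∈ Finset.range (k + 1), ρ ^ (k - l) * (γ ^ 2 * (d l) ^ 2) := by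
          rw [Finset.mul_sum]
          exact Finset.sum_congr rfl fun k _ => by ring
      _ ≤ 2 * C₂ ^ 2 * (1 / (1 - ρ)) * ((1 / (1 - ρ)) *
            ∑ l ∈ Finset.range K, γ ^ 2 * (d l) ^ 2) := by
          refine mul_le_mul_of_nonneg_left hswap (by positivity)
      _ = (2 * C₂ ^ 2 / (1 - ρ) ^ 2) * ∑ l ∈ Finset.range K, γ ^ 2 * (d l) ^ 2 := by
          have h0 : (1:ℝ) - ρ ≠ 0 := ne_of_gt hm
          field_simp
  -- monotonicity of the final d-sum
  have hmono : ∑ l ∈ Finset.range K, γ ^ 2 * (d l) ^ 2 ≤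
      ∑ l ∈ Finset.range (K + 1), γ ^ 2 * (d l) ^ 2 := by
    refine Finset.sum_le_sum_of_subset_of_nonneg
      (Finset.range_subset_range.2 (by omega)) fun l _ _ => ?_
    have := hdnn l
    positivity
  have hcoef : (0:ℝ) ≤ 2 * C₂ ^ 2 / (1 - ρ) ^ 2 := by positivity
  have := mul_le_mul_of_nonneg_left hmono hcoef
  linarith
end

section
/- Generalized small gain theorem for a 5-dimensional system: Let u₁,…,u₅ be nonnegative sequences and λ ∈ (0,1). Suppose for every N, the vector of weighted norms (|u₁|^{λ,N},…,|u₅|^{λ,N}) satisfies v ≼ G·v + ε componentwise, where G is a fixed nonnegative 5×5 matrix with spectral radius ρ(G) < 1 and ε is a fixed nonnegative vector independent of N. Then each |u_i|^{λ} = sup_{k} u_i^k/λ^k is finite, hence u_i^k = O(λ^k) for all i. -/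
/-- The weighted sup norm `|u|^{λ,N} = max_{0 ≤ k ≤ N} u^k / λ^k`. -/
noncomputable def wnorm (u : ℕ → ℝ) (lam : ℝ) (N : ℕ) : ℝ :=
  (Finset.range (N + 1)).sup'
    (Finset.nonempty_range_iff.mpr (Nat.succ_ne_zero N))
    (fun k => u k / lam ^ k)

/-- Powers of an entrywise-nonnegative matrix are entrywise nonnegative. -/
lemma aux_pow_entry_nonneg (G : Matrix (Fin 5) (Fin 5) ℝ)
    (hGnn : ∀ i j, 0 ≤ G i j) (m : ℕ) (i j : Fin 5) : 0 ≤ (G ^ m) i j := by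
  induction m generalizing i j with
  | zero => by_cases h : i = j <;> simp [Matrix.one_apply, h]
  | succ n ih =>
      rw [pow_succ, Matrix.mul_apply]
      exact Finset.sum_nonneg fun k _ => mul_nonneg (ih i k) (hGnn k j)

section Aux

open scoped Matrix

attribute [local instance] Matrix.linftyOpNormedRing Matrix.linftyOpNormedAlgebra

/-- From spectral radius < 1, some power has norm < 1 (Gelfand). -/
lemma aux_exists_pow_nnnorm_lt_one (A : Matrix (Fin 5) (Fin 5) ℂ)
    (h : spectralRadius ℂ A < 1) : ∃ m : ℕ, 1 ≤ m ∧ ‖A ^ m‖₊ < 1 := by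
  have h2 := spectrum.pow_nnnorm_pow_one_div_tendsto_nhds_spectralRadius A
  have h3 : ∀ᶠ n : ℕ in Filter.atTop,
      (‖A ^ n‖₊ ^ (1 / n : ℝ) : ENNReal) < 1 :=
    h2.eventually_lt_const h
  obtain ⟨m, hm1, hm⟩ := (h3.and (Filter.eventually_ge_atTop 1)).exists
  refine ⟨m, hm, ?_⟩
  by_contra hc
  push_neg at hc
  have hz : (0:ℝ) < 1 / m := by
    have : (1:ℝ) ≤ m := by exact_mod_cast hm
    positivity
  have : (1 : ENNReal) ≤ (‖A ^ m‖₊ ^ (1 / m : ℝ) : ENNReal) :=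
    ENNReal.one_le_rpow (by exact_mod_cast hc) hz
  exact absurd hm1 (not_lt.mpr this)

/-- Existence of a power of `G` with row sums less than 1. -/
lemma aux_exists_pow_row_sum_lt_one (G : Matrix (Fin 5) (Fin 5) ℝ)
    (hGnn : ∀ i j, 0 ≤ G i j)
    (hGspec : spectralRadius ℂ (G.map (algebraMap ℝ ℂ)) < 1) :
    ∃ m : ℕ, ∃ θ : ℝ, 0 ≤ θ ∧ θ < 1 ∧ ∀ i, ∑ j, (G ^ m) i j ≤ θ := by
  obtain ⟨m, _, hm⟩ := aux_exists_pow_nnnorm_lt_one (G.map (algebraMap ℝ ℂ)) hGspec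
  set A : Matrix (Fin 5) (Fin 5) ℂ := G.map (algebraMap ℝ ℂ) with hA
  refine ⟨m, (‖A ^ m‖₊ : ℝ), (‖A ^ m‖₊).coe_nonneg, by exact_mod_cast hm, ?_⟩
  intro i
  have hmap : A ^ m = (G ^ m).map (algebraMap ℝ ℂ) := by
    have := map_pow ((algebraMap ℝ ℂ).mapMatrix) G m
    simpa [RingHom.mapMatrix_apply, hA] using this.symm
  have h1 : (∑ j, ‖(A ^ m) i j‖₊ : NNReal) ≤ ‖A ^ m‖₊ := by
    rw [Matrix.linfty_opNNNorm_def (A ^ m)]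
    exact Finset.le_sup (f := fun i => ∑ j, ‖(A ^ m) i j‖₊) (Finset.mem_univ i)
  have h2 : ∑ j, (‖(A ^ m) i j‖₊ : ℝ) = ∑ j, (G ^ m) i j := by
    rw [hmap]
    refine Finset.sum_congr rfl fun j _ => ?_
    have hnn : 0 ≤ (G ^ m) i j := aux_pow_entry_nonneg G hGnn m i j
    simp [Matrix.map_apply, coe_nnnorm, Complex.norm_real, abs_of_nonneg hnn]
  calc ∑ j, (G ^ m) i j = ∑ j, (‖(A ^ m) i j‖₊ : ℝ) := h2.symm
    _ ≤ (‖A ^ m‖₊ : ℝ) := by exact_mod_cast h1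

end Aux

/-- generalized small gain theorem, 5-dimensional system:
if the vector of weighted norms satisfies `v ≼ G v + ε` componentwise,
uniformly in `N`, for a nonnegative matrix `G` with spectral radius `< 1`,
then each sequence satisfies `u_i^k = O(λ^k)`. -/
theorem stmt_11 (u : Fin 5 → ℕ → ℝ)
    (hunn : ∀ i k, 0 ≤ u i k)
    (lam : ℝ) (hlam0 : 0 < lam) (hlam1 : lam < 1)
    (G : Matrix (Fin 5) (Fin 5) ℝ) (hGnn : ∀ i j, 0 ≤ G i j)
    (hGspec : spectralRadius ℂ (G.map (algebraMap ℝ ℂ)) < 1)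
    (ε : Fin 5 → ℝ) (hεnn : ∀ i, 0 ≤ ε i)
    (hsys : ∀ N : ℕ, ∀ i : Fin 5,
      wnorm (u i) lam N ≤ ∑ j, G i j * wnorm (u j) lam N + ε i) :
    ∃ C : ℝ, ∀ i : Fin 5, ∀ k : ℕ, u i k ≤ C * lam ^ k := by
  obtain ⟨m, θ, hθ0, hθ1, hθ⟩ := aux_exists_pow_row_sum_lt_one G hGnn hGspec
  -- the accumulated error vector
  set W : ℕ → Fin 5 → ℝ := fun n i => ∑ l ∈ Finset.range n, ∑ j, (G ^ l) i j * ε j with hW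
  have hWnn : ∀ n i, 0 ≤ W n i := fun n i =>
    Finset.sum_nonneg fun l _ => Finset.sum_nonneg fun j _ =>
      mul_nonneg (aux_pow_entry_nonneg G hGnn l i j) (hεnn j)
  set D : ℝ := Finset.univ.sup' Finset.univ_nonempty (W m) with hD
  have hDnn : 0 ≤ D := le_trans (hWnn m 0) (Finset.le_sup' _ (Finset.mem_univ 0))
  have hWD : ∀ i, W m i ≤ D := fun i => Finset.le_sup' _ (Finset.mem_univ i)
  set C : ℝ := D / (1 - θ) with hC
  have hCnn : 0 ≤ C := div_nonneg hDnn (by linarith)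
  refine ⟨C, fun i k => ?_⟩
  -- uniform bound on the weighted norms
  have key : ∀ N : ℕ, ∀ i : Fin 5, wnorm (u i) lam N ≤ C := by
    intro N
    set v : Fin 5 → ℝ := fun i => wnorm (u i) lam N with hv
    have hvnn : ∀ i, 0 ≤ v i := by
      intro i
      have : u i 0 / lam ^ 0 ≤ v i := by
        show u i 0 / lam ^ 0 ≤ wnorm (u i) lam N
        unfold wnorm
        exact Finset.le_sup' (fun n => u i n / lam ^ n) (Finset.mem_range.mpr (Nat.succ_pos N))
      simpa using le_trans (by simpa using hunn i 0) this
    set M : ℝ := Finset.univ.sup' Finset.univ_nonempty v with hM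
    have hvM : ∀ i, v i ≤ M := fun i => Finset.le_sup' _ (Finset.mem_univ i)
    have hMnn : 0 ≤ M := le_trans (hvnn 0) (hvM 0)
    -- iterate the system inequality
    have iter : ∀ n : ℕ, ∀ i, v i ≤ ∑ j, (G ^ n) i j * v j + W n i := by
      intro n
      induction n with
      | zero => intro i; simp [hW, Matrix.one_apply]
      | succ n ih =>
          intro i
          have step : ∑ j, (G ^ n) i j * v j ≤
              ∑ j, (G ^ n) i j * (∑ k, G j k * v k + ε j) :=
            Finset.sum_le_sum fun j _ =>
              mul_le_mul_of_nonneg_left (hsys N j) (aux_pow_entry_nonneg G hGnn n i j)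
          have expand : ∑ j, (G ^ n) i j * (∑ k, G j k * v k + ε j) =
              ∑ k, (G ^ (n+1)) i k * v k + ∑ j, (G ^ n) i j * ε j := by
            simp only [mul_add, Finset.sum_add_distrib]
            congr 1
            simp only [Finset.mul_sum]
            rw [Finset.sum_comm]
            refine Finset.sum_congr rfl fun k _ => ?_
            rw [pow_succ, Matrix.mul_apply, Finset.sum_mul]
            refine Finset.sum_congr rfl fun j _ => by ring
          have hWsucc : W (n+1) i = W n i + ∑ j, (G ^ n) i j * ε j := by
            simp [hW, Finset.sum_range_succ]
          calc v i ≤ ∑ j, (G ^ n) i j * v j + W n i := ih i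
            _ ≤ (∑ k, (G ^ (n+1)) i k * v k + ∑ j, (G ^ n) i j * ε j) + W n i := by
                rw [← expand]; linarith [step]
            _ = ∑ k, (G ^ (n+1)) i k * v k + W (n+1) i := by rw [hWsucc]; ring
    -- conclude M ≤ θ M + D
    have hMle : M ≤ θ * M + D := by
      rw [hM]
      apply Finset.sup'_le
      intro i _
      calc v i ≤ ∑ j, (G ^ m) i j * v j + W m i := iter m i
        _ ≤ ∑ j, (G ^ m) i j * M + D := by
            gcongr with j _
            · exact aux_pow_entry_nonneg G hGnn m i j
            · exact hvM j
            · exact hWD i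
        _ = (∑ j, (G ^ m) i j) * M + D := by rw [Finset.sum_mul]
        _ ≤ θ * M + D := by
            have := hθ i
            nlinarith [hMnn]
    have : M ≤ C := by
      rw [hC]
      rw [le_div_iff₀ (by linarith)]
      nlinarith
    exact fun i => le_trans (hvM i) this
  -- conclude the pointwise bound
  have hk : u i k / lam ^ k ≤ wnorm (u i) lam k := by
    unfold wnorm
    exact Finset.le_sup' (fun n => u i n / lam ^ n) (Finset.mem_range.mpr (Nat.lt_succ_self k))
  have := le_trans hk (key k i)
  have hpow : (0:ℝ) < lam ^ k := pow_pos hlam0 k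
  calc u i k = (u i k / lam ^ k) * lam ^ k := by field_simp
    _ ≤ C * lam ^ k := mul_le_mul_of_nonneg_right this (le_of_lt hpow)
end

section
/- Sufficient descent of the asynchronous Lyapunov function: Let L^k := F(z̄^k) + (ψ^k)ᵀG̃(H^k), where z̄^{k+1} = z̄^k + γψ_{i}^k Δ^k with ψ_i^k ∈ [η, 1], and suppose (a) F is L-smooth, (b) the subproblem optimality gives ∇F(z̄^k)ᵀΔ^k ≤ −μ̃‖Δ^k‖² + G(x^k) − G(x̃^k) + (∇F(z̄^k) − g)ᵀΔ^k for appropriate g, and (c) the G-terms satisfy γψ_i^k(G(x^k) − G(x̃^k)) ≤ (ψ^k)ᵀG̃(H^k) − (ψ^{k+1})ᵀG̃(H^{k+1}). Then for any ε₁, ε₂ > 0, L^{k+1} ≤ L^k − γ(ημ̃ − γ(L/2 + 1/(2ε₁) + 1/(2ε₂)))‖Δ^k‖² + (ε₁/2)l²I·E_x² + (ε₂/2)I²E_y², where E_x, E_y bound the consensus and tracking disagreements via ‖∇F(z̄^k) − g‖ ≤ l√I·E_x + I·E_y. -/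
/-!
With the effective step `c = γ ψ_{i^k}^k ∈ [γη, γ]`, the `L`-smooth quadratic upper bound for `F`
along `z̄^{k+1} - z̄^k = c Δ^k` has its linear term controlled by the subproblem inequality; Young's
inequality splits the error term into the two disagreement pieces plus `‖c Δ^k‖²/(2ε)`, and the
`G`-terms are absorbed by the change of `(ψ^k)ᵀ G̃(H^k)`. Finally `c ≥ γη` in the decrease and
`c ≤ γ` in the quadratic terms.
-/

open scoped RealInnerProductSpace

variable {E : Type*} [NormedAddCommGroup E] [InnerProductSpace ℝ E]

theorem real_inner_le_young (a v : E) {ε : ℝ} (hε : 0 < ε) :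
    ⟪a, v⟫ ≤ ε / 2 * ‖a‖ ^ 2 + 1 / (2 * ε) * ‖v‖ ^ 2 := by
  have hgap : 0 ≤ (ε * ‖a‖ - ‖v‖) ^ 2 / (2 * ε) := by positivity
  calc ⟪a, v⟫ ≤ ‖a‖ * ‖v‖ := real_inner_le_norm a v
    _ = ε / 2 * ‖a‖ ^ 2 + 1 / (2 * ε) * ‖v‖ ^ 2 - (ε * ‖a‖ - ‖v‖) ^ 2 / (2 * ε) := by
      field_simp; ring
    _ ≤ ε / 2 * ‖a‖ ^ 2 + 1 / (2 * ε) * ‖v‖ ^ 2 := sub_le_self _ hgap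

theorem apply_add_le_of_lipschitz_gradient [CompleteSpace E] {F : E → ℝ} {F' : E → E} {L : ℝ}
    (hF : ∀ z, HasGradientAt F (F' z) z) (hlip : ∀ z w, ‖F' z - F' w‖ ≤ L * ‖z - w‖)
    (x v : E) : F (x + v) ≤ F x + ⟪F' x, v⟫ + L / 2 * ‖v‖ ^ 2 := by
  set φ : ℝ → ℝ := fun t => F (x + t • v) - t * ⟪F' x, v⟫ - L / 2 * t ^ 2 * ‖v‖ ^ 2
  have hφ : ∀ t, HasDerivAt φ (⟪F' (x + t • v) - F' x, v⟫ - L * t * ‖v‖ ^ 2) t := by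
    intro t
    have hline : HasDerivAt (fun s : ℝ => x + s • v) v t := by
      simpa using ((hasDerivAt_id t).smul_const v).const_add x
    have hF_line : HasDerivAt (fun s : ℝ => F (x + s • v)) ⟪F' (x + t • v), v⟫ t :=
      ((hF _).hasFDerivAt.comp_hasDerivAt t hline).congr_deriv (by simp)
    refine ((hF_line.sub ((hasDerivAt_id' t).mul_const _)).sub
      (((hasDerivAt_pow 2 t).const_mul (L / 2)).mul_const _)).congr_deriv ?_
    simp only [inner_sub_left]
    ring
  have hanti : AntitoneOn φ (Set.Ici 0) := by
    refine antitoneOn_of_hasDerivWithinAt_nonpos (convex_Ici 0)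
      (fun t _ => (hφ t).continuousAt.continuousWithinAt) (fun t _ => (hφ t).hasDerivWithinAt) ?_
    intro t ht
    rw [interior_Ici] at ht
    calc ⟪F' (x + t • v) - F' x, v⟫ - L * t * ‖v‖ ^ 2
        ≤ ‖F' (x + t • v) - F' x‖ * ‖v‖ - L * t * ‖v‖ ^ 2 := by
          gcongr; exact real_inner_le_norm _ _
      _ ≤ L * ‖t • v‖ * ‖v‖ - L * t * ‖v‖ ^ 2 := by
          gcongr; simpa using hlip (x + t • v) x
      _ = 0 := by rw [norm_smul, Real.norm_of_nonneg ht.le]; ring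
  have hφ01 : φ 1 ≤ φ 0 := hanti Set.self_mem_Ici (Set.mem_Ici.2 zero_le_one) zero_le_one
  simp only [φ, one_smul, zero_smul, add_zero] at hφ01
  linarith

theorem apply_add_smul_le_of_inexact_descent_direction [CompleteSpace E] {F : E → ℝ}
    {F' : E → E} {L : ℝ} (hF : ∀ z, HasGradientAt F (F' z) z)
    (hlip : ∀ z w, ‖F' z - F' w‖ ≤ L * ‖z - w‖) {x Δ a b : E} {μ r c ε₁ ε₂ : ℝ}
    (hc : 0 ≤ c) (hε₁ : 0 < ε₁) (hε₂ : 0 < ε₂)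
    (hdir : ⟪F' x, Δ⟫ ≤ -μ * ‖Δ‖ ^ 2 + r + ⟪a + b, Δ⟫) :
    F (x + c • Δ) ≤ F x - c * μ * ‖Δ‖ ^ 2 + c * r
      + (L / 2 + 1 / (2 * ε₁) + 1 / (2 * ε₂)) * c ^ 2 * ‖Δ‖ ^ 2
      + ε₁ / 2 * ‖a‖ ^ 2 + ε₂ / 2 * ‖b‖ ^ 2 := by
  have hnorm : ‖c • Δ‖ ^ 2 = c ^ 2 * ‖Δ‖ ^ 2 := by
    rw [norm_smul, Real.norm_of_nonneg hc, mul_pow]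
  have hlin : ⟪F' x, c • Δ⟫ ≤ -(c * μ * ‖Δ‖ ^ 2) + c * r + ⟪a, c • Δ⟫ + ⟪b, c • Δ⟫ := by
    simp only [real_inner_smul_right, inner_add_left] at hdir ⊢
    nlinarith
  have hya := real_inner_le_young a (c • Δ) hε₁
  have hyb := real_inner_le_young b (c • Δ) hε₂
  have hquad := apply_add_le_of_lipschitz_gradient hF hlip x (c • Δ)
  rw [hnorm] at hya hyb hquad
  linarith

/-- `H k i` are the rows of `H^k`, so `∑ i, ψ k i * G (H k i)` is `(ψ^k)ᵀ G̃(H^k)`, and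
`ψ k (ik k)` is the weight of the active agent. -/
theorem stmt_19_general {n S I : ℕ}
    (F G : EuclideanSpace ℝ (Fin n) → ℝ)
    (Fgrad : EuclideanSpace ℝ (Fin n) → EuclideanSpace ℝ (Fin n))
    (L l μ η γ : ℝ)
    (hF : ∀ z, HasGradientAt F (Fgrad z) z)
    (hFlip : ∀ z w, ‖Fgrad z - Fgrad w‖ ≤ L * ‖z - w‖)
    (hL : 0 ≤ L) (hμ : 0 < μ)
    (hγ0 : 0 < γ)
    (ψ : ℕ → Fin S → ℝ)
    (hψnn : ∀ k i, 0 ≤ ψ k i)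
    (hψlow : ∀ k i, η ≤ ψ k i)
    (H : ℕ → Fin S → EuclideanSpace ℝ (Fin n))
    (zbar : ℕ → EuclideanSpace ℝ (Fin n))
    (ik : ℕ → Fin S)
    (k : ℕ)
    (xk xtk g : EuclideanSpace ℝ (Fin n))
    (Δ : EuclideanSpace ℝ (Fin n))
    (hz : zbar (k + 1) = zbar k + (γ * ψ k (ik k)) • Δ)
    (hψ1 : ψ k (ik k) ≤ 1)
    (hsubopt : ⟪Fgrad (zbar k), Δ⟫ ≤
      -μ * ‖Δ‖ ^ 2 + G xk - G xtk + ⟪Fgrad (zbar k) - g, Δ⟫)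
    (hGstep : γ * ψ k (ik k) * (G xk - G xtk) ≤
      (∑ i, ψ k i * G (H k i)) - ∑ i, ψ (k + 1) i * G (H (k + 1) i))
    (Ex Ey : ℝ)
    (a b : EuclideanSpace ℝ (Fin n))
    (hab : Fgrad (zbar k) - g = a + b)
    (ha : ‖a‖ ≤ l * Real.sqrt I * Ex) (hb : ‖b‖ ≤ (I : ℝ) * Ey) :
    ∀ ε₁ ε₂ : ℝ, 0 < ε₁ → 0 < ε₂ →
      F (zbar (k + 1)) + ∑ i, ψ (k + 1) i * G (H (k + 1) i) ≤
        F (zbar k) + (∑ i, ψ k i * G (H k i))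
          - γ * (η * μ - γ * (L / 2 + 1 / (2 * ε₁) + 1 / (2 * ε₂))) * ‖Δ‖ ^ 2
          + (ε₁ / 2) * l ^ 2 * (I : ℝ) * Ex ^ 2
          + (ε₂ / 2) * (I : ℝ) ^ 2 * Ey ^ 2 := by
  intro ε₁ ε₂ hε₁ hε₂
  set c := γ * ψ k (ik k)
  have hc0 : 0 ≤ c := mul_nonneg hγ0.le (hψnn k (ik k))
  have hcη : γ * η ≤ c := mul_le_mul_of_nonneg_left (hψlow k (ik k)) hγ0.le
  have hcγ : c ≤ γ := mul_le_of_le_one_right hγ0.le hψ1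
  have hstep := apply_add_smul_le_of_inexact_descent_direction (x := zbar k) (Δ := Δ) (μ := μ)
    (r := G xk - G xtk) hF hFlip hc0
    hε₁ hε₂ (by rw [← hab]; linarith)
  rw [← hz] at hstep
  have ha2 : ‖a‖ ^ 2 ≤ l ^ 2 * I * Ex ^ 2 := by
    calc ‖a‖ ^ 2 ≤ (l * Real.sqrt I * Ex) ^ 2 := pow_le_pow_left₀ (norm_nonneg a) ha 2
      _ = l ^ 2 * I * Ex ^ 2 := by rw [mul_pow, mul_pow, Real.sq_sqrt I.cast_nonneg]
  have hb2 : ‖b‖ ^ 2 ≤ (I : ℝ) ^ 2 * Ey ^ 2 :=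
    (pow_le_pow_left₀ (norm_nonneg b) hb 2).trans_eq (mul_pow _ _ _)
  have hK : 0 ≤ L / 2 + 1 / (2 * ε₁) + 1 / (2 * ε₂) := by positivity
  have hdecrease : γ * η * μ * ‖Δ‖ ^ 2 ≤ c * μ * ‖Δ‖ ^ 2 := by gcongr
  have hquad : (L / 2 + 1 / (2 * ε₁) + 1 / (2 * ε₂)) * c ^ 2 * ‖Δ‖ ^ 2 ≤
      (L / 2 + 1 / (2 * ε₁) + 1 / (2 * ε₂)) * γ ^ 2 * ‖Δ‖ ^ 2 := by gcongr
  have hea : ε₁ / 2 * ‖a‖ ^ 2 ≤ ε₁ / 2 * (l ^ 2 * I * Ex ^ 2) := by gcongr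
  have heb : ε₂ / 2 * ‖b‖ ^ 2 ≤ ε₂ / 2 * ((I : ℝ) ^ 2 * Ey ^ 2) := by gcongr
  linarith

/-- sufficient descent of the asynchronous Lyapunov function
`L^k = F(z̄^k) + (ψ^k)ᵀ G̃(H^k)` at one step `k`, where
`z̄^{k+1} = z̄^k + γ ψ_{i^k}^k Δ^k`.  Here `H k : Fin S → E` are the rows of the
augmented matrix, `G̃` applies `G` row-wise, `xk`/`xtk` are the current iterate
and subproblem solution of the active agent `i k`, `Δ k = xtk − xk`, `g` is the
(scaled) gradient tracker, and the error `∇F(z̄^k) − g` decomposes as `a + b`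
with `‖a‖ ≤ l√I·E_x` and `‖b‖ ≤ I·E_y`. -/
theorem stmt_19 {n S I : ℕ} (hI : 0 < I)
    (F G : EuclideanSpace ℝ (Fin n) → ℝ)
    (Fgrad : EuclideanSpace ℝ (Fin n) → EuclideanSpace ℝ (Fin n))
    (L l μ η γ : ℝ)
    (hF : ∀ z, HasGradientAt F (Fgrad z) z)
    (hFlip : ∀ z w, ‖Fgrad z - Fgrad w‖ ≤ L * ‖z - w‖)
    (hL : 0 ≤ L) (hl : 0 ≤ l) (hμ : 0 < μ) (hη : 0 < η)
    (hγ0 : 0 < γ) (hγ1 : γ ≤ 1)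
    (ψ : ℕ → Fin S → ℝ)
    (hψnn : ∀ k i, 0 ≤ ψ k i) (hψsum : ∀ k, ∑ i, ψ k i = 1)
    (hψlow : ∀ k i, η ≤ ψ k i)
    (H : ℕ → Fin S → EuclideanSpace ℝ (Fin n))
    (zbar : ℕ → EuclideanSpace ℝ (Fin n))
    (ik : ℕ → Fin S)
    (k : ℕ)
    (xk xtk g : EuclideanSpace ℝ (Fin n))
    (Δ : EuclideanSpace ℝ (Fin n)) (hΔ : Δ = xtk - xk)
    (hz : zbar (k + 1) = zbar k + (γ * ψ k (ik k)) • Δ)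
    (hψ1 : ψ k (ik k) ≤ 1)
    (hsubopt : ⟪Fgrad (zbar k), Δ⟫ ≤
      -μ * ‖Δ‖ ^ 2 + G xk - G xtk + ⟪Fgrad (zbar k) - g, Δ⟫)
    (hGstep : γ * ψ k (ik k) * (G xk - G xtk) ≤
      (∑ i, ψ k i * G (H k i)) - ∑ i, ψ (k + 1) i * G (H (k + 1) i))
    (Ex Ey : ℝ) (hEx : 0 ≤ Ex) (hEy : 0 ≤ Ey)
    (a b : EuclideanSpace ℝ (Fin n))
    (hab : Fgrad (zbar k) - g = a + b)
    (ha : ‖a‖ ≤ l * Real.sqrt I * Ex) (hb : ‖b‖ ≤ (I : ℝ) * Ey) :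
    ∀ ε₁ ε₂ : ℝ, 0 < ε₁ → 0 < ε₂ →
      F (zbar (k + 1)) + ∑ i, ψ (k + 1) i * G (H (k + 1) i) ≤
        F (zbar k) + (∑ i, ψ k i * G (H k i))
          - γ * (η * μ - γ * (L / 2 + 1 / (2 * ε₁) + 1 / (2 * ε₂))) * ‖Δ‖ ^ 2
          + (ε₁ / 2) * l ^ 2 * (I : ℝ) * Ex ^ 2
          + (ε₂ / 2) * (I : ℝ) ^ 2 * Ey ^ 2 :=
  stmt_19_general F G Fgrad L l μ η γ hF hFlip hL hμ hγ0 ψ hψnn hψlow H zbar ik k xk xtk g Δ hz hψ1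
    hsubopt hGstep Ex Ey a b hab ha hb
end
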